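/- (Waldspurger) The dual cone C* is the disjoint union of the sets (1 − w)(C°) over w ∈ W: for every w ∈ W and x ∈ C° the vector x − w x lies in C*; every u ∈ C* can be written as u = x − w x for some w ∈ W and x ∈ C°; and for distinct w, w' ∈ W the sets {x − w x : x ∈ C°} and {x − w' x : x ∈ C°} are disjoint. -/

import Mathlib

open scoped RealInnerProductSpace

noncomputable section

/-- `g` is the orthogonal reflection in the linear hyperplane orthogonal to some
nonzero vector `u`. -/
def IsLinRefl {V : Type*} [NormedAddCommGroup V] [InnerProductSpace ℝ V]
    (g : V ≃ₗᵢ[ℝ] V) : Prop :=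
  ∃ u : V, u ≠ 0 ∧ ∀ x : V, g x = x - ((2 * ⟪x, u⟫) / ⟪u, u⟫) • u

/-- The union of the reflection hyperplanes (mirrors) of the reflections belonging to `W`;
the mirror of a reflection is exactly its set of fixed points. -/
def mirrors {V : Type*} [NormedAddCommGroup V] [InnerProductSpace ℝ V]
    (W : Subgroup (V ≃ₗᵢ[ℝ] V)) : Set V :=
  ⋃ g ∈ {g : V ≃ₗᵢ[ℝ] V | g ∈ W ∧ IsLinRefl g}, {x : V | g x = x}

/-- `C` is a fundamental chamber for `W`: the closure of a connected component of the
complement of the union of the reflection hyperplanes of `W`. -/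
def IsChamber {V : Type*} [NormedAddCommGroup V] [InnerProductSpace ℝ V]
    (W : Subgroup (V ≃ₗᵢ[ℝ] V)) (C : Set V) : Prop :=
  ∃ x₀ ∈ (mirrors W)ᶜ, C = closure (connectedComponentIn (mirrors W)ᶜ x₀)

/-!
Write `C` as the cone on which the roots `x₀ - s x₀` of the reflections `s ∈ W` are
nonnegative. Since `W` acts freely on `C°`, the identity is the unique maximiser of
`w ↦ ⟪w x, y⟫` for `x, y ∈ C°`. Hence `⟪w x, y⟫ ≤ ⟪x, y⟫` on `C` (the first claim), strictly on
`C°` when `w ≠ 1`, which gives disjointness, since `x - w x = x' - w' x'` forces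
`⟪w'⁻¹ w x, x'⟫ = ⟪x, x'⟫`; it also makes the folding of `V` onto `C` along orbits
`1`-Lipschitz.

For `u` coercive on `C` (within the span of the roots) the solutions `x ∈ C` of `x - w x = u` are
the fixed points of the nonexpansive map `x ↦ fold (x - u)`, which maps a large compact convex
set into itself; so they exist and form a convex set. Perturbing `u` along a root shows that they
do not all lie on one wall, hence some solution lies in `C°`. If instead `u` vanishes on a point
`d ∈ C` off some wall, the reflections fixing `d` form a smaller system of the same kind, and a
solution for it, pushed far along `d`, is a solution for `W`: induction on the number of
reflections concludes.
-/

open Filter Topology Set Function Bornology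

section General

variable {E : Type*}

theorem LipschitzWith.convex_fixedPoints [NormedAddCommGroup E] [NormedSpace ℝ E]
    [StrictConvexSpace ℝ E] {f : E → E} (hf : LipschitzWith 1 f) : Convex ℝ (fixedPoints f) := by
  intro x hx y hy a b ha hb hab
  rw [show a • x + b • y = AffineMap.lineMap x y b by
    rw [AffineMap.lineMap_apply_module, ← hab, add_sub_cancel_right]]
  set z := AffineMap.lineMap x y b
  have hxz : dist x (f z) ≤ b * dist x y := by
    calc dist x (f z) = dist (f x) (f z) := by rw [hx.eq]
      _ ≤ dist x z := by simpa using hf.dist_le_mul x z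
      _ = b * dist x y := by rw [dist_left_lineMap, Real.norm_of_nonneg hb]
  have hzy : dist (f z) y ≤ (1 - b) * dist x y := by
    calc dist (f z) y = dist (f z) (f y) := by rw [hy.eq]
      _ ≤ dist z y := by simpa using hf.dist_le_mul z y
      _ = (1 - b) * dist x y := by
        rw [dist_lineMap_right, Real.norm_of_nonneg (by linarith)]
  have := dist_triangle x (f z) y
  exact eq_lineMap_of_dist_eq_mul_of_dist_eq_mul (by linarith) (by linarith)

theorem exists_isFixedPt_of_lipschitzOnWith_one [NormedAddCommGroup E] [NormedSpace ℝ E]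
    {K : Set E} (hK : IsCompact K) (hKc : Convex ℝ K) (hne : K.Nonempty) {f : E → E}
    (hf : LipschitzOnWith 1 f K) (hfK : MapsTo f K K) : ∃ x ∈ K, IsFixedPt f x := by
  obtain ⟨a, ha⟩ := hne
  obtain ⟨D, hD⟩ := (hK.image_of_continuousOn hf.continuousOn).isBounded.subset_closedBall a
  -- fixed points of the contractions `x ↦ lineMap a (f x) θ` are almost fixed by `f`
  have happrox : ∀ θ : ℝ, 0 < θ → θ < 1 → ∃ x ∈ K, dist (f x) x ≤ (1 - θ) * D := by
    intro θ h0 h1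
    set g := fun x => AffineMap.lineMap a (f x) θ
    have hgK : MapsTo g K K := fun x hx => hKc.lineMap_mem ha (hfK hx) ⟨h0.le, h1.le⟩
    have hg : ContractingWith ⟨θ, h0.le⟩ (hgK.restrict g K K) := by
      refine ⟨h1, LipschitzWith.of_dist_le_mul fun x y => ?_⟩
      simp only [Subtype.dist_eq, MapsTo.val_restrict_apply, g]
      rw [AffineMap.lineMap_apply_module, AffineMap.lineMap_apply_module, dist_eq_norm,
        add_sub_add_left_eq_sub, ← smul_sub, norm_smul, Real.norm_of_nonneg h0.le, ← dist_eq_norm]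
      exact mul_le_mul_of_nonneg_left (by simpa using hf.dist_le_mul x x.2 y y.2) h0.le
    obtain ⟨x, hx, hfix, -⟩ := hg.exists_fixedPoint' hK.isComplete hgK ha (edist_ne_top _ _)
    refine ⟨x, hx, ?_⟩
    calc dist (f x) x = dist (f x) (g x) := by rw [hfix.eq]
      _ = (1 - θ) * dist (f x) a := by
        rw [dist_comm, dist_lineMap_right, Real.norm_of_nonneg (by linarith), dist_comm]
      _ ≤ (1 - θ) * D := mul_le_mul_of_nonneg_left (hD (mem_image_of_mem f hx)) (by linarith)
  obtain ⟨x, hx, hmin⟩ := hK.exists_isMinOn ⟨a, ha⟩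
    (continuous_dist.comp_continuousOn (hf.continuousOn.prodMk continuousOn_id))
  refine ⟨x, hx, dist_le_zero.1 <|
    ge_of_tendsto (f := fun θ : ℝ => (1 - θ) * D) (x := 𝓝[<] 1) ?_ ?_⟩
  · exact tendsto_nhdsWithin_of_tendsto_nhds <|
      ((continuous_const.sub continuous_id).mul continuous_const).tendsto' 1 0 (by simp)
  · filter_upwards [Ioo_mem_nhdsLT (zero_lt_one' ℝ)] with θ hθ
    obtain ⟨y, hy, hyθ⟩ := happrox θ hθ.1 hθ.2
    exact (hmin hy).trans hyθ

theorem exists_pos_mul_norm_le_inner [NormedAddCommGroup E] [InnerProductSpace ℝ E]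
    [ProperSpace E] {K : Set E} (hK : IsClosed K) (hKsmul : ∀ y ∈ K, ∀ t : ℝ, 0 < t → t • y ∈ K)
    {u : E} (hu : ∀ y ∈ K, y ≠ 0 → 0 < ⟪u, y⟫) : ∃ c > 0, ∀ y ∈ K, c * ‖y‖ ≤ ⟪u, y⟫ := by
  have hunit : ∀ y ∈ K, y ≠ 0 → ‖y‖⁻¹ • y ∈ K ∩ Metric.sphere 0 1 := fun y hy hy0 =>
    ⟨hKsmul y hy _ (by positivity), by simp [norm_smul, hy0]⟩
  rcases (K ∩ Metric.sphere (0 : E) 1).eq_empty_or_nonempty with hS | hS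
  · refine ⟨1, one_pos, fun y hy => ?_⟩
    obtain rfl : y = 0 := by_contra fun hy0 => by simpa [hS] using hunit y hy hy0
    simp
  obtain ⟨y₁, ⟨hy₁K, hy₁⟩, hmin⟩ := ((isCompact_sphere 0 1).inter_left hK).exists_isMinOn hS
    (innerSL ℝ u).continuous.continuousOn
  have hy₁0 : y₁ ≠ 0 := by rintro rfl; simp at hy₁
  refine ⟨⟪u, y₁⟫, hu y₁ hy₁K hy₁0, fun y hy => ?_⟩
  rcases eq_or_ne y 0 with rfl | hy0
  · simp
  have : ⟪u, y₁⟫ ≤ ‖y‖⁻¹ * ⟪u, y⟫ := by simpa [real_inner_smul_right] using hmin (hunit y hy hy0)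
  rw [le_inv_mul_iff₀ (norm_pos_iff.2 hy0)] at this
  linarith

theorem Convex.exists_mem_forall_inner_ne_zero [NormedAddCommGroup E] [InnerProductSpace ℝ E]
    {ι : Type*} {S : Set E} (hS : Convex ℝ S) (hne : S.Nonempty) {r : ι → E} {I : Set ι}
    (hI : I.Finite) (hnonneg : ∀ y ∈ S, ∀ i ∈ I, 0 ≤ ⟪y, r i⟫) :
    ∃ x ∈ S, ∀ i ∈ I, (∃ y ∈ S, ⟪y, r i⟫ ≠ 0) → ⟪x, r i⟫ ≠ 0 := by
  induction I, hI using Set.Finite.induction_on with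
  | empty =>
    obtain ⟨x, hx⟩ := hne
    exact ⟨x, hx, by simp⟩
  | @insert j J _ _ ih =>
    obtain ⟨x, hxS, hx⟩ := ih fun y hy i hi => hnonneg y hy i (mem_insert_of_mem j hi)
    by_cases hj : ∀ y ∈ S, ⟪y, r j⟫ = 0
    · refine ⟨x, hxS, fun i hi hiS => ?_⟩
      rcases hi with rfl | hi
      · obtain ⟨y, hyS, hy⟩ := hiS
        exact absurd (hj y hyS) hy
      · exact hx i hi hiS
    · obtain ⟨y, hyS, hyj⟩ : ∃ y ∈ S, ⟪y, r j⟫ ≠ 0 := by simpa using hj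
      -- on the midpoint, a functional vanishes only if it vanishes at both ends
      refine ⟨(1 / 2 : ℝ) • x + (1 / 2 : ℝ) • y,
        hS hxS hyS (by norm_num) (by norm_num) (by norm_num), fun i hi hiS => ?_⟩
      rw [inner_add_left, real_inner_smul_left, real_inner_smul_left]
      have hx0 := hnonneg x hxS i hi
      have hy0 := hnonneg y hyS i hi
      rcases hi with rfl | hi
      · have := lt_of_le_of_ne hy0 (Ne.symm hyj)
        positivity
      · have := lt_of_le_of_ne hx0 (Ne.symm (hx i hi hiS))
        positivity

theorem exists_apply_eq_sub_of_tendsto [NormedAddCommGroup E] [ProperSpace E] {K : Set E}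
    (hK : IsClosed K) {fs : ℕ → E → E} (hfin : (range fs).Finite) (hcont : ∀ n, Continuous (fs n))
    {xs us : ℕ → E} {u : E} (hus : Tendsto us atTop (𝓝 u)) (hxK : ∀ n, xs n ∈ K)
    (hxb : IsBounded (range xs)) (heq : ∀ n, fs n (xs n) = xs n - us n) :
    ∃ n, ∃ x ∈ K, fs n x = x - u := by
  obtain ⟨n₀, hn₀⟩ : ∃ n₀, ∃ᶠ n in atTop, fs n = fs n₀ := by
    by_contra! h
    have hall : ∀ g ∈ range fs, ∀ᶠ n in atTop, fs n ≠ g := by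
      rintro _ ⟨m, rfl⟩
      exact h m
    obtain ⟨n, hn⟩ := ((eventually_all_finite hfin).2 hall).exists
    exact hn _ ⟨n, rfl⟩ rfl
  obtain ⟨φ, hφ, hφn⟩ := extraction_of_frequently_atTop hn₀
  obtain ⟨x, -, ψ, hψ, hx⟩ := tendsto_subseq_of_bounded hxb fun k => mem_range_self (φ k)
  refine ⟨n₀, x, hK.mem_of_tendsto hx (Eventually.of_forall fun k => hxK _),
    tendsto_nhds_unique (((hcont n₀).tendsto x).comp hx) ?_⟩
  refine (hx.sub (hus.comp (hφ.comp hψ).tendsto_atTop)).congr fun k => ?_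
  simp only [comp_apply, ← hφn (ψ k), heq]

end General

section Roots

variable {V : Type*} [NormedAddCommGroup V] [InnerProductSpace ℝ V]

theorem LinearIsometryEquiv.two_mul_inner_sub_apply (g : V ≃ₗᵢ[ℝ] V) (x : V) :
    2 * ⟪x, x - g x⟫ = ‖x - g x‖ ^ 2 := by
  rw [norm_sub_sq_real, g.norm_map, inner_sub_right, real_inner_self_eq_norm_sq]
  ring

theorem LinearIsometryEquiv.inner_lt_inner_of_sub_apply_eq (g : V ≃ₗᵢ[ℝ] V) {x x' u r : V}
    {ε : ℝ} (hε : 0 < ε) (hr : r ≠ 0) (hx : x - g x = u) (hx' : x' - g x' = u - ε • r) :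
    ⟪x', r⟫ < ⟪x, r⟫ := by
  have hξ : (x' - x) - g (x' - x) = -(ε • r) := by
    rw [map_sub, sub_sub_sub_comm, hx, hx']
    abel
  have := g.two_mul_inner_sub_apply (x' - x)
  rw [hξ, norm_neg, norm_smul, inner_neg_right, real_inner_smul_right, inner_sub_left,
    Real.norm_of_nonneg hε.le] at this
  have : 0 < (ε * ‖r‖) ^ 2 := by positivity
  nlinarith

theorem half_mul_norm_le_inner_sub_smul {u r y : V} {c ε : ℝ} (h : c * ‖y‖ ≤ ⟪u, y⟫)
    (hε : 0 ≤ ε) (hεr : ε * ‖r‖ ≤ c / 2) : c / 2 * ‖y‖ ≤ ⟪u - ε • r, y⟫ := by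
  rw [inner_sub_left, real_inner_smul_left]
  have := mul_le_mul_of_nonneg_left (real_inner_le_norm r y) hε
  have := mul_le_mul_of_nonneg_right hεr (norm_nonneg y)
  linarith

theorem LinearIsometryEquiv.apply_eq_self_of_mem_closure {S : Set (V ≃ₗᵢ[ℝ] V)} {d : V}
    (h : ∀ s ∈ S, s d = d) {g : V ≃ₗᵢ[ℝ] V} (hg : g ∈ Subgroup.closure S) : g d = d := by
  induction hg using Subgroup.closure_induction with
  | mem s hs => exact h s hs
  | one => rfl
  | mul a b _ _ ha hb => simp [ha, hb]
  | inv a _ ha => exact a.symm_apply_eq.2 ha.symm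

/-- For a reflection `s` not fixing `x₀`, this is the root of `s` that is positive at `x₀`. -/
def rootAt (x₀ : V) (s : V ≃ₗᵢ[ℝ] V) : V := x₀ - s x₀

theorem inner_rootAt_pos {x₀ : V} {g : V ≃ₗᵢ[ℝ] V} (h : g x₀ ≠ x₀) : 0 < ⟪x₀, rootAt x₀ g⟫ := by
  have := g.two_mul_inner_sub_apply x₀
  have : 0 < ‖x₀ - g x₀‖ := norm_pos_iff.2 (sub_ne_zero.2 h.symm)
  rw [rootAt]
  nlinarith

namespace IsLinRefl

variable {s : V ≃ₗᵢ[ℝ] V} {x₀ : V}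

theorem apply_eq_sub_smul_rootAt (hs : IsLinRefl s) (h : s x₀ ≠ x₀) (x : V) :
    s x = x - (2 * ⟪x, rootAt x₀ s⟫ / ⟪rootAt x₀ s, rootAt x₀ s⟫) • rootAt x₀ s := by
  obtain ⟨b, hb, hs⟩ := hs
  have hroot : rootAt x₀ s = (2 * ⟪x₀, b⟫ / ⟪b, b⟫) • b := by rw [rootAt, hs x₀, sub_sub_cancel]
  have hk : 2 * ⟪x₀, b⟫ / ⟪b, b⟫ ≠ 0 := fun hk => h (by rw [hs x₀, hk, zero_smul, sub_zero])
  generalize 2 * ⟪x₀, b⟫ / ⟪b, b⟫ = k at hroot hk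
  have hbb : ⟪b, b⟫ ≠ 0 := inner_self_ne_zero.2 hb
  rw [hs x, hroot]
  simp only [real_inner_smul_right, real_inner_smul_left, smul_smul]
  congr 2
  field_simp

theorem inner_apply (hs : IsLinRefl s) (h : s x₀ ≠ x₀) (x y : V) :
    ⟪s x, y⟫ = ⟪x, y⟫ -
      2 * ⟪x, rootAt x₀ s⟫ / ⟪rootAt x₀ s, rootAt x₀ s⟫ * ⟪rootAt x₀ s, y⟫ := by
  rw [hs.apply_eq_sub_smul_rootAt h, inner_sub_left, real_inner_smul_left]

theorem apply_eq_self_iff (hs : IsLinRefl s) (h : s x₀ ≠ x₀) {x : V} :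
    s x = x ↔ ⟪x, rootAt x₀ s⟫ = 0 := by
  rw [hs.apply_eq_sub_smul_rootAt h, sub_eq_self, smul_eq_zero, div_eq_zero_iff,
    mul_eq_zero]
  simp [sub_ne_zero.2 h.symm, rootAt]

theorem conj (hs : IsLinRefl s) (g : V ≃ₗᵢ[ℝ] V) : IsLinRefl (g⁻¹ * s * g) := by
  obtain ⟨b, hb, hs⟩ := hs
  refine ⟨g⁻¹ b, fun h => hb (by simpa using congrArg g h), fun x => ?_⟩
  have hadj : ∀ y, ⟪g y, b⟫ = ⟪y, g⁻¹ b⟫ := fun y => by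
    simpa using (g⁻¹.inner_map_map (g y) b).symm
  change g⁻¹ (s (g x)) = _
  rw [hs, map_sub, map_smul, hadj, ← g⁻¹.inner_map_map b b]
  congr 1
  exact g.symm_apply_apply x

end IsLinRefl

end Roots

section Chambers

variable {V : Type*} [NormedAddCommGroup V] [InnerProductSpace ℝ V] (x₀ : V)
  (R : Set (V ≃ₗᵢ[ℝ] V))

def closedChamber : Set V := {x | ∀ s ∈ R, 0 ≤ ⟪x, rootAt x₀ s⟫}

def openChamber : Set V := {x | ∀ s ∈ R, 0 < ⟪x, rootAt x₀ s⟫}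

def rootSpan : Submodule ℝ V := Submodule.span ℝ (rootAt x₀ '' R)

variable {x₀ R}

theorem openChamber_subset_closedChamber : openChamber x₀ R ⊆ closedChamber x₀ R :=
  fun _ hx s hs => (hx s hs).le

theorem isClosed_closedChamber : IsClosed (closedChamber x₀ R) := by
  simp only [closedChamber, ofPred_forall]
  exact isClosed_biInter fun s _ => isClosed_le continuous_const (by fun_prop)

theorem isOpen_openChamber (hR : R.Finite) : IsOpen (openChamber x₀ R) := by
  simp only [openChamber, ofPred_forall]
  exact hR.isOpen_biInter fun s _ => isOpen_lt continuous_const (by fun_prop)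

theorem convex_closedChamber : Convex ℝ (closedChamber x₀ R) := by
  intro x hx y hy a b ha hb _ s hs
  rw [inner_add_left, real_inner_smul_left, real_inner_smul_left]
  have := hx s hs
  have := hy s hs
  positivity

theorem convex_openChamber : Convex ℝ (openChamber x₀ R) := by
  intro x hx y hy a b ha hb hab s hs
  rw [inner_add_left, real_inner_smul_left, real_inner_smul_left]
  rcases ha.eq_or_lt with rfl | ha
  · rw [zero_add] at hab
    simpa [hab] using hy s hs
  · exact add_pos_of_pos_of_nonneg (mul_pos ha (hx s hs)) (mul_nonneg hb (hy s hs).le)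

theorem smul_mem_closedChamber {x : V} (hx : x ∈ closedChamber x₀ R) {t : ℝ} (ht : 0 ≤ t) :
    t • x ∈ closedChamber x₀ R := fun s hs => by
  rw [real_inner_smul_left]
  exact mul_nonneg ht (hx s hs)

theorem mem_openChamber_self (h : ∀ s ∈ R, s x₀ ≠ x₀) : x₀ ∈ openChamber x₀ R :=
  fun s hs => inner_rootAt_pos (h s hs)

theorem closure_openChamber (h : ∀ s ∈ R, s x₀ ≠ x₀) :
    closure (openChamber x₀ R) = closedChamber x₀ R := by
  refine (closure_minimal openChamber_subset_closedChamber isClosed_closedChamber).antisymm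
    fun y hy => mem_closure_of_tendsto (b := 𝓝[>] (0 : ℝ)) (f := fun t => y + t • x₀) ?_ ?_
  · exact tendsto_nhdsWithin_of_tendsto_nhds (by simpa using
      (show Continuous fun t : ℝ => y + t • x₀ by fun_prop).tendsto 0)
  · filter_upwards [self_mem_nhdsWithin] with t (ht : 0 < t) s hs
    rw [inner_add_left, real_inner_smul_left]
    have := hy s hs
    have := inner_rootAt_pos (h s hs)
    positivity

theorem interior_closedChamber (hR : R.Finite) (h : ∀ s ∈ R, s x₀ ≠ x₀) :
    interior (closedChamber x₀ R) = openChamber x₀ R := by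
  refine subset_antisymm (fun z hz s hs => ?_)
    (interior_maximal openChamber_subset_closedChamber (isOpen_openChamber hR))
  -- moving from `z` against the root `r` would leave the chamber if `⟪z, r⟫ = 0`
  set r := rootAt x₀ s
  have hr : 0 < ⟪r, r⟫ := real_inner_self_pos.2 (sub_ne_zero.2 (h s hs).symm)
  have hev : ∀ᶠ t in 𝓝[>] (0 : ℝ), z - t • r ∈ interior (closedChamber x₀ R) :=
    tendsto_nhdsWithin_of_tendsto_nhds (by simpa using
      (show Continuous fun t : ℝ => z - t • r by fun_prop).tendsto 0)
      |>.eventually (isOpen_interior.mem_nhds hz)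
  obtain ⟨t, ht, (ht0 : 0 < t)⟩ := (hev.and self_mem_nhdsWithin).exists
  have := interior_subset ht s hs
  rw [inner_sub_left, real_inner_smul_left] at this
  nlinarith

theorem mem_rootSpan_of_forall_inner_nonneg [FiniteDimensional ℝ V] {u : V}
    (hu : ∀ y ∈ closedChamber x₀ R, 0 ≤ ⟪u, y⟫) : u ∈ rootSpan x₀ R := by
  have hperp : ∀ n ∈ (rootSpan x₀ R)ᗮ, n ∈ closedChamber x₀ R := fun n hn s hs =>
    ((Submodule.mem_orthogonal' _ n).1 hn _ (Submodule.subset_span ⟨s, hs, rfl⟩)).ge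
  rw [← Submodule.orthogonal_orthogonal (rootSpan x₀ R)]
  refine (Submodule.mem_orthogonal _ u).2 fun n hn => le_antisymm ?_ ?_
  · simpa [real_inner_comm] using hu (-n) (hperp _ (neg_mem hn))
  · simpa [real_inner_comm] using hu n (hperp _ hn)

theorem eq_zero_of_mem_rootSpan {y : V} (hy : y ∈ rootSpan x₀ R)
    (h : ∀ s ∈ R, ⟪y, rootAt x₀ s⟫ = 0) : y = 0 := by
  have : rootSpan x₀ R ≤ (ℝ ∙ y)ᗮ := Submodule.span_le.2 <| by
    rintro _ ⟨s, hs, rfl⟩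
    exact Submodule.mem_orthogonal_singleton_iff_inner_right.2 (h s hs)
  exact inner_self_eq_zero.1 (Submodule.mem_orthogonal_singleton_iff_inner_right.1 (this hy))

/-- The setting of the proof: `R` is a set of reflections, none fixing `x₀`, generating a finite
group `⟨R⟩`, and no nontrivial element of `⟨R⟩` maps a point of the open chamber into the closed
one. Unlike the hypotheses of the theorem, this passes to the reflections fixing a point of the
closed chamber (`ChamberSystem.restrict`), which makes an induction on `R` possible. -/
structure ChamberSystem (x₀ : V) (R : Set (V ≃ₗᵢ[ℝ] V)) : Prop where
  isLinRefl : ∀ s ∈ R, IsLinRefl s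
  apply_ne : ∀ s ∈ R, s x₀ ≠ x₀
  finite : (Subgroup.closure R : Set (V ≃ₗᵢ[ℝ] V)).Finite
  eq_one : ∀ g ∈ Subgroup.closure R, ∀ x ∈ openChamber x₀ R, g x ∈ closedChamber x₀ R → g = 1

namespace ChamberSystem

variable {s s₀ g g' : V ≃ₗᵢ[ℝ] V} {x x' y z z' d u : V} {c : ℝ}

theorem finite_reflections (hR : ChamberSystem x₀ R) : R.Finite :=
  hR.finite.subset Subgroup.subset_closure

theorem apply_eq_self_iff (hR : ChamberSystem x₀ R) (hs : s ∈ R) :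
    s x = x ↔ ⟪x, rootAt x₀ s⟫ = 0 :=
  (hR.isLinRefl s hs).apply_eq_self_iff (hR.apply_ne s hs)

theorem inner_rootAt_nonneg_of_inner_apply_le (hR : ChamberSystem x₀ R) (hs : s ∈ R)
    (hy : 0 < ⟪y, rootAt x₀ s⟫) (h : ⟪s z, y⟫ ≤ ⟪z, y⟫) : 0 ≤ ⟪z, rootAt x₀ s⟫ := by
  rw [(hR.isLinRefl s hs).inner_apply (hR.apply_ne s hs),
    real_inner_comm y (rootAt x₀ s)] at h
  set r := rootAt x₀ s
  have hr : 0 < ⟪r, r⟫ := real_inner_self_pos.2 (sub_ne_zero.2 (hR.apply_ne s hs).symm)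
  have := mul_nonneg (nonneg_of_mul_nonneg_left
    (by linarith : 0 ≤ 2 * ⟪z, r⟫ / ⟪r, r⟫ * ⟪y, r⟫) hy) hr.le
  rw [div_mul_cancel₀ _ hr.ne'] at this
  linarith

theorem apply_mem_closedChamber_of_isMaxOn (hR : ChamberSystem x₀ R)
    (hy : y ∈ openChamber x₀ R) (hg : g ∈ Subgroup.closure R)
    (hmax : ∀ g' ∈ Subgroup.closure R, ⟪g' z, y⟫ ≤ ⟪g z, y⟫) : g z ∈ closedChamber x₀ R :=
  fun s hs => hR.inner_rootAt_nonneg_of_inner_apply_le hs (hy s hs)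
    (hmax (s * g) (mul_mem (Subgroup.subset_closure hs) hg))

theorem exists_apply_mem_closedChamber (hR : ChamberSystem x₀ R) (z : V) :
    ∃ g ∈ Subgroup.closure R, g z ∈ closedChamber x₀ R := by
  obtain ⟨g, hg, hmax⟩ := exists_max_image _ (fun g => ⟪g z, x₀⟫) hR.finite ⟨1, one_mem _⟩
  exact ⟨g, hg, hR.apply_mem_closedChamber_of_isMaxOn (mem_openChamber_self hR.apply_ne) hg hmax⟩

theorem eq_one_of_isMaxOn (hR : ChamberSystem x₀ R) (hx : x ∈ openChamber x₀ R)
    (hy : y ∈ openChamber x₀ R) (hg : g ∈ Subgroup.closure R)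
    (hmax : ∀ g' ∈ Subgroup.closure R, ⟪g' x, y⟫ ≤ ⟪g x, y⟫) : g = 1 :=
  hR.eq_one g hg x hx (hR.apply_mem_closedChamber_of_isMaxOn hy hg hmax)

theorem inner_apply_lt (hR : ChamberSystem x₀ R) (hg : g ∈ Subgroup.closure R) (hg1 : g ≠ 1)
    (hx : x ∈ openChamber x₀ R) (hy : y ∈ openChamber x₀ R) : ⟪g x, y⟫ < ⟪x, y⟫ := by
  obtain ⟨g₀, hg₀, hmax⟩ := exists_max_image _ (fun g => ⟪g x, y⟫) hR.finite ⟨1, one_mem _⟩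
  obtain rfl := hR.eq_one_of_isMaxOn hx hy hg₀ hmax
  refine lt_of_le_of_ne (hmax g hg) fun h => hg1 (hR.eq_one_of_isMaxOn hx hy hg fun g' hg' => ?_)
  exact (hmax g' hg').trans h.ge

theorem inner_apply_le (hR : ChamberSystem x₀ R) (hg : g ∈ Subgroup.closure R)
    (hx : x ∈ closedChamber x₀ R) (hy : y ∈ closedChamber x₀ R) : ⟪g x, y⟫ ≤ ⟪x, y⟫ := by
  have hopen :
      openChamber x₀ R ×ˢ openChamber x₀ R ⊆ {p : V × V | ⟪g p.1, p.2⟫ ≤ ⟪p.1, p.2⟫} := by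
    rintro ⟨a, b⟩ ⟨ha, hb⟩
    rcases eq_or_ne g 1 with rfl | hg1
    · simp
    · exact (hR.inner_apply_lt hg hg1 ha hb).le
  have hcl := closure_minimal hopen <| isClosed_le (f := fun p : V × V => ⟪g p.1, p.2⟫)
    (g := fun p : V × V => ⟪p.1, p.2⟫) (by fun_prop) (by fun_prop)
  rw [closure_prod_eq, closure_openChamber hR.apply_ne] at hcl
  exact hcl (mk_mem_prod hx hy)

theorem inner_le_inner_apply_apply (hR : ChamberSystem x₀ R) (hg : g ∈ Subgroup.closure R)
    (hg' : g' ∈ Subgroup.closure R) (hz : g z ∈ closedChamber x₀ R)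
    (hz' : g' z' ∈ closedChamber x₀ R) : ⟪z, z'⟫ ≤ ⟪g z, g' z'⟫ :=
  calc ⟪z, z'⟫ = ⟪(g' * g⁻¹) (g z), g' z'⟫ := by simp
    _ ≤ ⟪g z, g' z'⟫ := hR.inner_apply_le (mul_mem hg' (inv_mem hg)) hz hz'

theorem norm_apply_sub_apply_le (hR : ChamberSystem x₀ R) (hg : g ∈ Subgroup.closure R)
    (hg' : g' ∈ Subgroup.closure R) (hz : g z ∈ closedChamber x₀ R)
    (hz' : g' z' ∈ closedChamber x₀ R) : ‖g z - g' z'‖ ≤ ‖z - z'‖ := by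
  refine (pow_le_pow_iff_left₀ (norm_nonneg _) (norm_nonneg _) two_ne_zero).1 ?_
  rw [norm_sub_sq_real, norm_sub_sq_real, g.norm_map, g'.norm_map]
  linarith [hR.inner_le_inner_apply_apply hg hg' hz hz']

theorem eq_of_sub_apply_eq (hR : ChamberSystem x₀ R)
    (hg : g ∈ Subgroup.closure R) (hg' : g' ∈ Subgroup.closure R) (hx : x ∈ openChamber x₀ R)
    (hx' : x' ∈ openChamber x₀ R) (h : x - g x = x' - g' x') : g = g' := by
  by_contra hne
  have hlt := hR.inner_apply_lt (mul_mem (inv_mem hg') hg)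
    (fun h1 => hne (inv_mul_eq_one.1 h1).symm) hx hx'
  have hsub : g x - g' x' = x - x' := (sub_eq_sub_iff_sub_eq_sub.1 h).symm
  have hnorm := congrArg (‖·‖ ^ 2) hsub
  simp only [norm_sub_sq_real, g.norm_map, g'.norm_map] at hnorm
  have hinner : ⟪(g'⁻¹ * g) x, x'⟫ = ⟪g x, g' x'⟫ := by
    rw [← g'.inner_map_map]
    simp
  linarith

noncomputable def fold (hR : ChamberSystem x₀ R) (z : V) : V :=
  (hR.exists_apply_mem_closedChamber z).choose z

theorem exists_apply_eq_fold (hR : ChamberSystem x₀ R) (z : V) :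
    ∃ g ∈ Subgroup.closure R, g z = hR.fold z :=
  ⟨_, (hR.exists_apply_mem_closedChamber z).choose_spec.1, rfl⟩

theorem fold_mem_closedChamber (hR : ChamberSystem x₀ R) (z : V) :
    hR.fold z ∈ closedChamber x₀ R :=
  (hR.exists_apply_mem_closedChamber z).choose_spec.2

theorem fold_eq (hR : ChamberSystem x₀ R) (hg : g ∈ Subgroup.closure R)
    (hz : g z ∈ closedChamber x₀ R) : hR.fold z = g z := by
  obtain ⟨g', hg', hfold⟩ := hR.exists_apply_eq_fold z
  have := hR.norm_apply_sub_apply_le hg' hg (hfold ▸ hR.fold_mem_closedChamber z) hz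
  rwa [sub_self, norm_zero, norm_le_zero_iff, sub_eq_zero, hfold] at this

theorem lipschitzWith_fold (hR : ChamberSystem x₀ R) : LipschitzWith 1 hR.fold := by
  refine LipschitzWith.of_dist_le_mul fun z z' => ?_
  obtain ⟨g, hg, hgz⟩ := hR.exists_apply_eq_fold z
  obtain ⟨g', hg', hgz'⟩ := hR.exists_apply_eq_fold z'
  rw [NNReal.coe_one, one_mul, dist_eq_norm, dist_eq_norm, ← hgz, ← hgz']
  exact hR.norm_apply_sub_apply_le hg hg' (hgz ▸ hR.fold_mem_closedChamber z)
    (hgz' ▸ hR.fold_mem_closedChamber z')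

theorem norm_fold (hR : ChamberSystem x₀ R) (z : V) : ‖hR.fold z‖ = ‖z‖ := by
  obtain ⟨g, -, hgz⟩ := hR.exists_apply_eq_fold z
  rw [← hgz, g.norm_map]

theorem apply_sub_self_mem_rootSpan (hR : ChamberSystem x₀ R) (hg : g ∈ Subgroup.closure R) :
    ∀ z, g z - z ∈ rootSpan x₀ R := by
  induction hg using Subgroup.closure_induction with
  | mem s hs =>
    intro z
    rw [(hR.isLinRefl s hs).apply_eq_sub_smul_rootAt (hR.apply_ne s hs), sub_sub_cancel_left]
    exact neg_mem (Submodule.smul_mem _ _ (Submodule.subset_span ⟨s, hs, rfl⟩))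
  | one => simp
  | mul a b _ _ ha hb =>
    intro z
    simpa using add_mem (ha (b z)) (hb z)
  | inv a _ ha =>
    intro z
    simpa using neg_mem (ha (a⁻¹ z))

theorem fold_sub_self_mem_rootSpan (hR : ChamberSystem x₀ R) (z : V) :
    hR.fold z - z ∈ rootSpan x₀ R := by
  obtain ⟨g, hg, hgz⟩ := hR.exists_apply_eq_fold z
  exact hgz ▸ hR.apply_sub_self_mem_rootSpan hg z

/-- The solutions `x` in the closed chamber of `x - g x = u`, `g ∈ ⟨R⟩`, within the root span;
written as fixed points of a nonexpansive map, so that they form a convex set. -/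
def solutions (hR : ChamberSystem x₀ R) (u : V) : Set V :=
  {x | x ∈ rootSpan x₀ R ∧ hR.fold (x - u) = x}

theorem mem_closedChamber_of_mem_solutions (hR : ChamberSystem x₀ R)
    (hx : x ∈ hR.solutions u) : x ∈ closedChamber x₀ R :=
  hx.2 ▸ hR.fold_mem_closedChamber _

theorem exists_sub_apply_eq_of_mem_solutions (hR : ChamberSystem x₀ R)
    (hx : x ∈ hR.solutions u) : ∃ g ∈ Subgroup.closure R, x - g x = u := by
  obtain ⟨g, hg, hgx⟩ := hR.exists_apply_eq_fold (x - u)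
  refine ⟨g⁻¹, inv_mem hg, ?_⟩
  rw [hx.2] at hgx
  have : g⁻¹ x = x - u := g.symm_apply_eq.2 hgx.symm
  rw [this, sub_sub_cancel]

theorem mem_solutions_of_sub_apply_eq (hR : ChamberSystem x₀ R) (hxC : x ∈ closedChamber x₀ R)
    (hxL : x ∈ rootSpan x₀ R) (hg : g ∈ Subgroup.closure R) (h : x - g x = u) :
    x ∈ hR.solutions u := by
  have hgu : g⁻¹ (x - u) = x := by simp [← h]
  exact ⟨hxL, (hR.fold_eq (inv_mem hg) (by rwa [hgu])).trans hgu⟩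

theorem convex_solutions (hR : ChamberSystem x₀ R) (u : V) : Convex ℝ (hR.solutions u) :=
  (rootSpan x₀ R).convex.inter <| LipschitzWith.convex_fixedPoints <|
    LipschitzWith.of_dist_le_mul fun x y => by
      simpa [dist_sub_right] using hR.lipschitzWith_fold.dist_le_mul (x - u) (y - u)

theorem two_mul_mul_norm_le_of_mem_solutions (hR : ChamberSystem x₀ R)
    (hcoer : ∀ y ∈ closedChamber x₀ R ∩ rootSpan x₀ R, c * ‖y‖ ≤ ⟪u, y⟫)
    (hx : x ∈ hR.solutions u) : 2 * c * ‖x‖ ≤ ‖u‖ ^ 2 := by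
  obtain ⟨g, -, rfl⟩ := hR.exists_sub_apply_eq_of_mem_solutions hx
  have := hcoer x ⟨hR.mem_closedChamber_of_mem_solutions hx, hx.1⟩
  rw [← g.two_mul_inner_sub_apply, real_inner_comm]
  linarith

theorem eventually_inner_add_smul_pos (hR : ChamberSystem x₀ R) (hd : d ∈ closedChamber x₀ R)
    (y : V) : ∀ᶠ t : ℝ in atTop, ∀ s ∈ R, s d ≠ d → 0 < ⟪y + t • d, rootAt x₀ s⟫ := by
  refine (eventually_all_finite hR.finite_reflections).2 fun s hs => ?_
  by_cases hsd : s d = d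
  · exact Eventually.of_forall fun _ h => absurd hsd h
  have hpos : 0 < ⟪d, rootAt x₀ s⟫ :=
    (hd s hs).lt_of_ne' ((hR.apply_eq_self_iff hs).not.1 hsd)
  filter_upwards [(tendsto_atTop_add_const_left _ ⟪y, rootAt x₀ s⟫
    (tendsto_id.atTop_mul_const hpos)).eventually_gt_atTop 0] with t ht _
  rwa [inner_add_left, real_inner_smul_left]

theorem eventually_add_smul_mem_closedChamber (hR : ChamberSystem x₀ R)
    (hd : d ∈ closedChamber x₀ R) (hy : y ∈ closedChamber x₀ {s ∈ R | s d = d}) :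
    ∀ᶠ t : ℝ in atTop, y + t • d ∈ closedChamber x₀ R := by
  filter_upwards [hR.eventually_inner_add_smul_pos hd y] with t ht s hs
  by_cases hsd : s d = d
  · rw [inner_add_left, real_inner_smul_left, (hR.apply_eq_self_iff hs).1 hsd, mul_zero,
      add_zero]
    exact hy s ⟨hs, hsd⟩
  · exact (ht s hs hsd).le

theorem eventually_add_smul_mem_openChamber (hR : ChamberSystem x₀ R)
    (hd : d ∈ closedChamber x₀ R) (hy : y ∈ openChamber x₀ {s ∈ R | s d = d}) :
    ∀ᶠ t : ℝ in atTop, y + t • d ∈ openChamber x₀ R := by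
  filter_upwards [hR.eventually_inner_add_smul_pos hd y] with t ht s hs
  by_cases hsd : s d = d
  · rw [inner_add_left, real_inner_smul_left, (hR.apply_eq_self_iff hs).1 hsd, mul_zero,
      add_zero]
    exact hy s ⟨hs, hsd⟩
  · exact ht s hs hsd

theorem restrict (hR : ChamberSystem x₀ R) (hd : d ∈ closedChamber x₀ R) :
    ChamberSystem x₀ {s ∈ R | s d = d} where
  isLinRefl s hs := hR.isLinRefl s hs.1
  apply_ne s hs := hR.apply_ne s hs.1
  finite := hR.finite.subset (Subgroup.closure_mono (sep_subset R _))
  eq_one g hg x hx hgx := by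
    have hgd : g d = d := LinearIsometryEquiv.apply_eq_self_of_mem_closure (fun s hs => hs.2) hg
    obtain ⟨t, hxt, hgxt⟩ := ((hR.eventually_add_smul_mem_openChamber hd hx).and
      (hR.eventually_add_smul_mem_closedChamber hd hgx)).exists
    refine hR.eq_one g (Subgroup.closure_mono (sep_subset R _) hg) _ hxt ?_
    rwa [map_add, map_smul, hgd]

theorem forall_inner_nonneg_restrict (hR : ChamberSystem x₀ R) (hd : d ∈ closedChamber x₀ R)
    (hud : ⟪u, d⟫ = 0) (hu : ∀ y ∈ closedChamber x₀ R, 0 ≤ ⟪u, y⟫) :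
    ∀ y ∈ closedChamber x₀ {s ∈ R | s d = d}, 0 ≤ ⟪u, y⟫ := fun y hy => by
  obtain ⟨t, ht⟩ := (hR.eventually_add_smul_mem_closedChamber hd hy).exists
  simpa [inner_add_right, real_inner_smul_right, hud] using hu _ ht

theorem exists_sub_apply_eq_of_restrict (hR : ChamberSystem x₀ R) (hd : d ∈ closedChamber x₀ R)
    (h : ∃ g ∈ Subgroup.closure {s ∈ R | s d = d}, ∃ x ∈ openChamber x₀ {s ∈ R | s d = d},
      x - g x = u) :
    ∃ g ∈ Subgroup.closure R, ∃ x ∈ openChamber x₀ R, x - g x = u := by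
  obtain ⟨g, hg, x, hx, rfl⟩ := h
  have hgd : g d = d := LinearIsometryEquiv.apply_eq_self_of_mem_closure (fun s hs => hs.2) hg
  obtain ⟨t, ht⟩ := (hR.eventually_add_smul_mem_openChamber hd hx).exists
  refine ⟨g, Subgroup.closure_mono (sep_subset R _) hg, x + t • d, ht, ?_⟩
  rw [map_add, map_smul, hgd]
  abel

variable [FiniteDimensional ℝ V]

theorem solutions_nonempty (hR : ChamberSystem x₀ R) (hu : u ∈ rootSpan x₀ R) (hc : 0 < c)
    (hcoer : ∀ y ∈ closedChamber x₀ R ∩ rootSpan x₀ R, c * ‖y‖ ≤ ⟪u, y⟫) :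
    (hR.solutions u).Nonempty := by
  set M := ‖u‖ ^ 2 / (2 * c) + ‖u‖
  set K := (closedChamber x₀ R ∩ rootSpan x₀ R) ∩ Metric.closedBall 0 M
  have hK : IsCompact K := (isCompact_closedBall 0 M).inter_left
    (isClosed_closedChamber.inter (Submodule.closed_of_finiteDimensional _))
  have hKc : Convex ℝ K :=
    (convex_closedChamber.inter (rootSpan x₀ R).convex).inter (convex_closedBall 0 M)
  have h0 : (0 : V) ∈ K := ⟨⟨fun s _ => by simp, zero_mem _⟩, by simp; positivity⟩
  have hmaps : MapsTo (fun x => hR.fold (x - u)) K K := by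
    rintro x ⟨⟨hxC, hxL⟩, hxM⟩
    rw [mem_closedBall_zero_iff] at hxM
    refine ⟨⟨hR.fold_mem_closedChamber _, ?_⟩, ?_⟩
    · simpa using add_mem (hR.fold_sub_self_mem_rootSpan (x - u)) (sub_mem hxL hu)
    rw [mem_closedBall_zero_iff, hR.norm_fold]
    have hx := hcoer x ⟨hxC, hxL⟩
    by_cases hbig : ‖u‖ ^ 2 ≤ 2 * c * ‖x‖
    · -- far from the origin, `x ↦ x - u` does not increase the norm
      refine le_trans ?_ hxM
      refine (pow_le_pow_iff_left₀ (norm_nonneg _) (norm_nonneg _) two_ne_zero).1 ?_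
      rw [norm_sub_sq_real, real_inner_comm]
      linarith
    · have : ‖x‖ < ‖u‖ ^ 2 / (2 * c) := by
        rw [lt_div_iff₀ (by positivity)]
        linarith
      linarith [norm_sub_le x u]
  obtain ⟨x, hxK, hx⟩ := exists_isFixedPt_of_lipschitzOnWith_one hK hKc ⟨0, h0⟩
    (LipschitzWith.lipschitzOnWith <| LipschitzWith.of_dist_le_mul fun x y => by
      simpa [dist_sub_right] using hR.lipschitzWith_fold.dist_le_mul (x - u) (y - u)) hmaps
  exact ⟨x, hxK.1.2, hx⟩

/-- If all solutions for `u` lay on the wall of `s₀`, solutions for `u - ε • rootAt x₀ s₀` with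
`ε → 0` would accumulate at one of them with a common `g`, and would then lie strictly on the
negative side of that wall. -/
theorem exists_mem_solutions_inner_rootAt_ne_zero (hR : ChamberSystem x₀ R) (hs₀ : s₀ ∈ R)
    (hu : u ∈ rootSpan x₀ R) (hc : 0 < c)
    (hcoer : ∀ y ∈ closedChamber x₀ R ∩ rootSpan x₀ R, c * ‖y‖ ≤ ⟪u, y⟫) :
    ∃ x ∈ hR.solutions u, ⟪x, rootAt x₀ s₀⟫ ≠ 0 := by
  by_contra! hwall
  set r := rootAt x₀ s₀
  have hr : r ≠ 0 := sub_ne_zero.2 (hR.apply_ne s₀ hs₀).symm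
  obtain ⟨δ, hδ0, hδ⟩ : ∃ δ > 0, δ * ‖r‖ = c / 2 :=
    ⟨c / (2 * ‖r‖), by positivity, by field_simp [norm_ne_zero_iff.2 hr]⟩
  set us : ℕ → V := fun n => u - (δ / (n + 1)) • r
  have hus : Tendsto us atTop (𝓝 u) := by
    simpa [us, div_eq_mul_one_div δ] using
      tendsto_const_nhds.sub ((tendsto_one_div_add_atTop_nhds_zero_nat.const_mul δ).smul_const r)
  have hcoer' : ∀ n, ∀ y ∈ closedChamber x₀ R ∩ rootSpan x₀ R, c / 2 * ‖y‖ ≤ ⟪us n, y⟫ :=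
    fun n y hy => half_mul_norm_le_inner_sub_smul (hcoer y hy) (by positivity) <| hδ ▸
      mul_le_mul_of_nonneg_right (div_le_self hδ0.le (by linarith [n.cast_nonneg (α := ℝ)]))
        (norm_nonneg r)
  choose xs hxs using fun n => hR.solutions_nonempty (u := us n)
    (sub_mem hu (Submodule.smul_mem _ _ (Submodule.subset_span ⟨s₀, hs₀, rfl⟩)))
    (half_pos hc) (hcoer' n)
  choose gs hgs hgxs using fun n => hR.exists_sub_apply_eq_of_mem_solutions (hxs n)
  obtain ⟨B, hB⟩ := isBounded_iff_forall_norm_le.1 (Metric.isBounded_range_of_tendsto us hus)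
  have hxsB : IsBounded (range xs) := isBounded_iff_forall_norm_le.2 ⟨B ^ 2 / c, by
    rintro _ ⟨n, rfl⟩
    have := hR.two_mul_mul_norm_le_of_mem_solutions (hcoer' n) (hxs n)
    have := pow_le_pow_left₀ (norm_nonneg _) (hB _ (mem_range_self n)) 2
    rw [le_div_iff₀ hc]
    linarith⟩
  obtain ⟨n, x, ⟨hxC, hxL⟩, hx⟩ := exists_apply_eq_sub_of_tendsto
    (isClosed_closedChamber.inter (Submodule.closed_of_finiteDimensional _))
    (fs := fun n => gs n) ((hR.finite.image _).subset (range_subset_iff.2 fun n =>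
      mem_image_of_mem _ (hgs n))) (fun n => (gs n).continuous) hus
    (fun n => ⟨hR.mem_closedChamber_of_mem_solutions (hxs n), (hxs n).1⟩) hxsB
    (fun n => by rw [← hgxs n, sub_sub_cancel])
  have hxsol := hR.mem_solutions_of_sub_apply_eq hxC hxL (hgs n) (by rw [hx, sub_sub_cancel])
  have := (gs n).inner_lt_inner_of_sub_apply_eq (by positivity) hr
    (by rw [hx, sub_sub_cancel]) (hgxs n)
  linarith [hwall x hxsol, hR.mem_closedChamber_of_mem_solutions (hxs n) s₀ hs₀]

theorem exists_sub_apply_eq_of_coercive (hR : ChamberSystem x₀ R) (hu : u ∈ rootSpan x₀ R)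
    (hc : 0 < c) (hcoer : ∀ y ∈ closedChamber x₀ R ∩ rootSpan x₀ R, c * ‖y‖ ≤ ⟪u, y⟫) :
    ∃ g ∈ Subgroup.closure R, ∃ x ∈ openChamber x₀ R, x - g x = u := by
  obtain ⟨x, hx, hwall⟩ := (hR.convex_solutions u).exists_mem_forall_inner_ne_zero
    (hR.solutions_nonempty hu hc hcoer) hR.finite_reflections (r := rootAt x₀)
    fun y hy s hs => hR.mem_closedChamber_of_mem_solutions hy s hs
  obtain ⟨g, hg, hgx⟩ := hR.exists_sub_apply_eq_of_mem_solutions hx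
  refine ⟨g, hg, x, fun s hs => ?_, hgx⟩
  exact (hR.mem_closedChamber_of_mem_solutions hx s hs).lt_of_ne'
    (hwall s hs (hR.exists_mem_solutions_inner_rootAt_ne_zero hs hu hc hcoer))

theorem exists_coercive (hR : ChamberSystem x₀ R)
    (hu : ∀ y ∈ closedChamber x₀ R, 0 ≤ ⟪u, y⟫)
    (hwall : ∀ d ∈ closedChamber x₀ R, ⟪u, d⟫ = 0 → ∀ s ∈ R, s d = d) :
    ∃ c > 0, ∀ y ∈ closedChamber x₀ R ∩ rootSpan x₀ R, c * ‖y‖ ≤ ⟪u, y⟫ := by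
  refine exists_pos_mul_norm_le_inner
    (isClosed_closedChamber.inter (Submodule.closed_of_finiteDimensional _))
    (fun y hy t ht => ⟨smul_mem_closedChamber hy.1 ht.le, Submodule.smul_mem _ t hy.2⟩)
    fun y hy hy0 => (hu y hy.1).lt_of_ne' fun huy => hy0 ?_
  exact eq_zero_of_mem_rootSpan hy.2 fun s hs =>
    (hR.apply_eq_self_iff hs).1 (hwall y hy.1 huy s hs)

theorem exists_sub_apply_eq (hR : ChamberSystem x₀ R)
    (hu : ∀ y ∈ closedChamber x₀ R, 0 ≤ ⟪u, y⟫) :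
    ∃ g ∈ Subgroup.closure R, ∃ x ∈ openChamber x₀ R, x - g x = u := by
  induction hn : R.ncard using Nat.strong_induction_on generalizing R with
  | _ n ih =>
  by_cases hwall : ∀ d ∈ closedChamber x₀ R, ⟪u, d⟫ = 0 → ∀ s ∈ R, s d = d
  · obtain ⟨c, hc, hcoer⟩ := hR.exists_coercive hu hwall
    exact hR.exists_sub_apply_eq_of_coercive (mem_rootSpan_of_forall_inner_nonneg hu) hc hcoer
  · -- `u` vanishes on a face of the chamber: pass to the reflections fixing that face
    obtain ⟨d, hd, hud, s, hs, hsd⟩ :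
        ∃ d ∈ closedChamber x₀ R, ⟪u, d⟫ = 0 ∧ ∃ s ∈ R, s d ≠ d := by
      simpa using hwall
    have hlt : {s ∈ R | s d = d}.ncard < n :=
      hn ▸ ncard_lt_ncard ⟨sep_subset _ _, fun h => hsd (h hs).2⟩ hR.finite_reflections
    exact hR.exists_sub_apply_eq_of_restrict hd
      (ih _ hlt (hR.restrict hd) (hR.forall_inner_nonneg_restrict hd hud hu) rfl)

end ChamberSystem

end Chambers

section Reflections

variable {V : Type*} [NormedAddCommGroup V] [InnerProductSpace ℝ V]
  {W : Subgroup (V ≃ₗᵢ[ℝ] V)} {x₀ x : V} {s : V ≃ₗᵢ[ℝ] V}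

def reflections (W : Subgroup (V ≃ₗᵢ[ℝ] V)) : Set (V ≃ₗᵢ[ℝ] V) := {g | g ∈ W ∧ IsLinRefl g}

theorem mem_mirrors_iff : x ∈ mirrors W ↔ ∃ s ∈ reflections W, s x = x := by
  simp [mirrors, reflections]

theorem apply_ne_of_notMem_mirrors (hx : x ∉ mirrors W) (hs : s ∈ reflections W) : s x ≠ x :=
  fun h => hx (mem_mirrors_iff.2 ⟨s, hs, h⟩)

theorem openChamber_subset_mirrors_compl (hx₀ : x₀ ∉ mirrors W) :
    openChamber x₀ (reflections W) ⊆ (mirrors W)ᶜ := by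
  rintro x hx hxm
  obtain ⟨s, hs, hsx⟩ := mem_mirrors_iff.1 hxm
  have := hx s hs
  rw [(hs.2.apply_eq_self_iff (apply_ne_of_notMem_mirrors hx₀ hs)).1 hsx] at this
  exact lt_irrefl _ this

theorem connectedComponentIn_mirrors_compl (hx₀ : x₀ ∉ mirrors W) :
    connectedComponentIn (mirrors W)ᶜ x₀ = openChamber x₀ (reflections W) := by
  refine subset_antisymm (fun x hx s hs => ?_) ?_
  · by_contra! hneg
    obtain ⟨y, hy, hy0⟩ := isPreconnected_connectedComponentIn.intermediate_value hx
      (mem_connectedComponentIn hx₀) (f := fun y => ⟪y, rootAt x₀ s⟫) (by fun_prop)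
      ⟨hneg, (inner_rootAt_pos (apply_ne_of_notMem_mirrors hx₀ hs)).le⟩
    exact connectedComponentIn_subset _ _ hy (mem_mirrors_iff.2
      ⟨s, hs, (hs.2.apply_eq_self_iff (apply_ne_of_notMem_mirrors hx₀ hs)).2 hy0⟩)
  · exact convex_openChamber.isPreconnected.subset_connectedComponentIn
      (mem_openChamber_self fun s hs => apply_ne_of_notMem_mirrors hx₀ hs)
      (openChamber_subset_mirrors_compl hx₀)

theorem chamberSystem_reflections (hWfin : (W : Set (V ≃ₗᵢ[ℝ] V)).Finite)
    (hx₀ : x₀ ∉ mirrors W)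
    (hdisj : ∀ w ∈ W, ∀ w' ∈ W, w ≠ w' → ∀ x ∈ openChamber x₀ (reflections W),
      ∀ x' ∈ openChamber x₀ (reflections W), w x ≠ w' x') :
    ChamberSystem x₀ (reflections W) where
  isLinRefl s hs := hs.2
  apply_ne s hs := apply_ne_of_notMem_mirrors hx₀ hs
  finite := hWfin.subset ((Subgroup.closure_le W).2 fun s hs => hs.1)
  eq_one g hg x hx hgx := by
    have hgW : g ∈ W := (Subgroup.closure_le W).2 (fun s hs => hs.1) hg
    -- a wall through `g x` would give a reflection of `W` fixing `x`
    have hgx' : g x ∈ openChamber x₀ (reflections W) := fun s hs =>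
      (hgx s hs).lt_of_ne' fun h0 => by
        have hfix : (g⁻¹ * s * g) x = x := by
          change g⁻¹ (s (g x)) = x
          rw [(hs.2.apply_eq_self_iff (apply_ne_of_notMem_mirrors hx₀ hs)).2 h0]
          simp
        exact openChamber_subset_mirrors_compl hx₀ hx (mem_mirrors_iff.2
          ⟨_, ⟨W.mul_mem (W.mul_mem (W.inv_mem hgW) hs.1) hgW, hs.2.conj g⟩, hfix⟩)
    by_contra hg1
    exact hdisj g hgW 1 W.one_mem hg1 x hx (g x) hgx' rfl

end Reflections

theorem waldspurger_general {V : Type*} [NormedAddCommGroup V] [InnerProductSpace ℝ V]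
    [FiniteDimensional ℝ V]
    (W : Subgroup (V ≃ₗᵢ[ℝ] V)) (C : Set V)
    (hWfin : (W : Set (V ≃ₗᵢ[ℝ] V)).Finite)
    (hWgen : Subgroup.closure {g : V ≃ₗᵢ[ℝ] V | g ∈ W ∧ IsLinRefl g} = W)
    (hC : IsChamber W C)
    (hdisj : ∀ w ∈ W, ∀ w' ∈ W, w ≠ w' →
      ∀ x ∈ interior C, ∀ x' ∈ interior C, w x ≠ w' x') :
    (∀ w ∈ W, ∀ x ∈ interior C, ∀ y ∈ C, 0 ≤ ⟪x - w x, y⟫) ∧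
    (∀ u : V, (∀ y ∈ C, 0 ≤ ⟪u, y⟫) → ∃ w ∈ W, ∃ x ∈ interior C, u = x - w x) ∧
    (∀ w ∈ W, ∀ w' ∈ W, w ≠ w' →
      Disjoint {u : V | ∃ x ∈ interior C, u = x - w x}
        {u : V | ∃ x ∈ interior C, u = x - w' x}) := by
  obtain ⟨x₀, hx₀, rfl⟩ := hC
  have hW {w} : w ∈ Subgroup.closure (reflections W) ↔ w ∈ W := by
    rw [show Subgroup.closure (reflections W) = W from hWgen]
  have hrefl : ∀ s ∈ reflections W, s x₀ ≠ x₀ := fun s hs => apply_ne_of_notMem_mirrors hx₀ hs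
  have hfin : (reflections W).Finite := hWfin.subset fun s hs => hs.1
  rw [connectedComponentIn_mirrors_compl hx₀, closure_openChamber hrefl,
    interior_closedChamber hfin hrefl] at hdisj ⊢
  have hR := chamberSystem_reflections hWfin hx₀ hdisj
  refine ⟨fun w hw x hx y hy => ?_, fun u hu => ?_, fun w hw w' hw' hne => ?_⟩
  · rw [inner_sub_left, sub_nonneg]
    exact hR.inner_apply_le (hW.2 hw) (openChamber_subset_closedChamber hx) hy
  · obtain ⟨g, hg, x, hx, rfl⟩ := hR.exists_sub_apply_eq hu
    exact ⟨g, hW.1 hg, x, hx, rfl⟩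
  · refine Set.disjoint_left.2 ?_
    rintro _ ⟨x, hx, rfl⟩ ⟨x', hx', h⟩
    exact hne (hR.eq_of_sub_apply_eq (hW.2 hw) (hW.2 hw') hx hx' h)

/-- Waldspurger's theorem: the dual cone `C* = {u | ∀ y ∈ C, 0 ≤ ⟪u, y⟫}` is the disjoint
union over `w ∈ W` of the sets `(1 - w)(C°)`. -/
theorem waldspurger {V : Type*} [NormedAddCommGroup V] [InnerProductSpace ℝ V]
    [FiniteDimensional ℝ V]
    (W : Subgroup (V ≃ₗᵢ[ℝ] V)) (C : Set V)
    (hWfin : (W : Set (V ≃ₗᵢ[ℝ] V)).Finite)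
    (hWgen : Subgroup.closure {g : V ≃ₗᵢ[ℝ] V | g ∈ W ∧ IsLinRefl g} = W)
    (hC : IsChamber W C)
    (hcover : ∀ v : V, ∃ w ∈ W, ∃ x ∈ C, w x = v)
    (hdisj : ∀ w ∈ W, ∀ w' ∈ W, w ≠ w' →
      ∀ x ∈ interior C, ∀ x' ∈ interior C, w x ≠ w' x') :
    (∀ w ∈ W, ∀ x ∈ interior C, ∀ y ∈ C, 0 ≤ ⟪x - w x, y⟫) ∧
    (∀ u : V, (∀ y ∈ C, 0 ≤ ⟪u, y⟫) → ∃ w ∈ W, ∃ x ∈ interior C, u = x - w x) ∧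
    (∀ w ∈ W, ∀ w' ∈ W, w ≠ w' →
      Disjoint {u : V | ∃ x ∈ interior C, u = x - w x}
        {u : V | ∃ x ∈ interior C, u = x - w' x}) :=
  waldspurger_general W C hWfin hWgen hC hdisj
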